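/- For every natural number L, the sum over j from -L to 2L of (-1)^j * q^(j(3j+1)/2 + 3j) * [2L-j choose L+j]_q equals -q^{-2} + q^{2L-2}[3 choose 2]_q - q^{3L-1}. -/

import Mathlib

open Finset

/-- The indeterminate `q`, as an element of the field of rational functions over `ℚ`. -/
noncomputable def q : RatFunc ℚ := RatFunc.X

/-- The Gaussian (q-)binomial coefficient `[n choose k]_t` with base `t`,
defined as `(1-t^(n-k+1))⋯(1-t^n) / ((1-t)⋯(1-t^k))` for `0 ≤ k ≤ n` and `0` otherwise. -/
noncomputable def qb (t : RatFunc ℚ) (n k : ℤ) : RatFunc ℚ :=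
  if 0 ≤ k ∧ k ≤ n then
    (∏ i ∈ Finset.range k.toNat, (1 - t ^ (n - (i : ℤ)))) /
      (∏ i ∈ Finset.range k.toNat, (1 - t ^ ((i : ℤ) + 1)))
  else 0

lemma hq : q ≠ 0 := RatFunc.X_ne_zero

lemma q_zpow_ne_one {m : ℤ} (hm : 1 ≤ m) : q ^ m ≠ 1 := by
  lift m to ℕ using (by omega)
  rw [zpow_natCast]
  intro h
  have h2 : (algebraMap (Polynomial ℚ) (RatFunc ℚ)) (Polynomial.X ^ m)
      = (algebraMap (Polynomial ℚ) (RatFunc ℚ)) 1 := by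
    rw [map_pow, map_one, RatFunc.algebraMap_X]
    exact h
  have h3 := RatFunc.algebraMap_injective ℚ h2
  have h4 := congrArg Polynomial.natDegree h3
  simp [Polynomial.natDegree_X_pow] at h4
  omega

lemma one_sub_q_zpow_ne_zero {m : ℤ} (hm : 1 ≤ m) : (1 : RatFunc ℚ) - q ^ m ≠ 0 :=
  fun h => q_zpow_ne_one hm (by linear_combination -h)

lemma q_zpow_ne_zero (m : ℤ) : q ^ m ≠ 0 := zpow_ne_zero m hq

/-- numerator product -/
noncomputable def Nu (n : ℤ) (k : ℕ) : RatFunc ℚ := ∏ i ∈ Finset.range k, (1 - q ^ (n - (i : ℤ)))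
/-- denominator product -/
noncomputable def De (k : ℕ) : RatFunc ℚ := ∏ i ∈ Finset.range k, (1 - q ^ ((i : ℤ) + 1))

lemma qb_eq {n k : ℤ} (h0 : 0 ≤ k) (h : k ≤ n) : qb q n k = Nu n k.toNat / De k.toNat :=
  if_pos ⟨h0, h⟩

lemma qb_zero {n k : ℤ} (h : k < 0 ∨ n < k) : qb q n k = 0 :=
  if_neg (by omega)

lemma De_ne_zero (k : ℕ) : De k ≠ 0 := by
  refine Finset.prod_ne_zero_iff.mpr fun i _ => one_sub_q_zpow_ne_zero (by omega)

lemma qb_zero_right {n : ℤ} (h : 0 ≤ n) : qb q n 0 = 1 := by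
  rw [qb_eq le_rfl h]
  simp [Nu, De]

lemma qb_self {n : ℤ} (h : 0 ≤ n) : qb q n n = 1 := by
  rw [qb_eq h le_rfl]
  have : Nu n n.toNat = De n.toNat := by
    unfold Nu De
    rw [← Finset.prod_range_reflect]
    refine Finset.prod_congr rfl fun i hi => ?_
    rw [Finset.mem_range] at hi
    congr 2
    omega
  rw [this, div_self (De_ne_zero _)]

lemma Nu_succ' (n : ℤ) (m : ℕ) : Nu n (m+1) = Nu (n-1) m * (1 - q ^ n) := by
  unfold Nu
  rw [Finset.prod_range_succ']
  congr 1
  · refine Finset.prod_congr rfl fun i _ => ?_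
    congr 2
    push_cast; ring
  · norm_num

lemma Nu_succ (n : ℤ) (m : ℕ) : Nu n (m+1) = Nu n m * (1 - q ^ (n - (m:ℤ))) :=
  Finset.prod_range_succ _ m

lemma De_succ (m : ℕ) : De (m+1) = De m * (1 - q ^ ((m:ℤ)+1)) :=
  Finset.prod_range_succ _ m

lemma pascal₁ (n r : ℤ) (hn : 1 ≤ n) :
    qb q n r = qb q (n-1) (r-1) + q ^ r * qb q (n-1) r := by
  rcases lt_or_ge r 0 with hr | hr
  · rw [qb_zero (Or.inl hr), qb_zero (Or.inl (by omega)), qb_zero (Or.inl hr)]; ring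
  rcases eq_or_lt_of_le hr with hr0 | hr1
  · rw [← hr0, qb_zero (n := n-1) (k := 0-1) (Or.inl (by norm_num)),
      qb_zero_right (by omega), qb_zero_right (by omega)]
    norm_num
  rcases lt_or_ge (n:ℤ) r with hnr | hnr
  · rw [qb_zero (Or.inr hnr), qb_zero (Or.inr (by omega)), qb_zero (Or.inr (by omega))]; ring
  rcases eq_or_lt_of_le hnr with hrn | hrn
  · rw [hrn] at *
    rw [qb_self (by omega), qb_self (by omega), qb_zero (Or.inr (by omega))]
    ring
  -- main case : 1 ≤ r ≤ n - 1
  have hm : ∃ m : ℕ, r = (m:ℤ) + 1 := ⟨(r-1).toNat, by omega⟩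
  obtain ⟨m, hm⟩ := hm
  rw [qb_eq (by omega) (by omega), qb_eq (by omega) (by omega), qb_eq (by omega) (by omega)]
  have h1 : r.toNat = m + 1 := by omega
  have h2 : (r-1).toNat = m := by omega
  rw [h1, h2, Nu_succ' n m, Nu_succ (n-1) m, De_succ m]
  have hDm := De_ne_zero m
  have hfr : (1:RatFunc ℚ) - q ^ ((m:ℤ)+1) ≠ 0 := one_sub_q_zpow_ne_zero (by omega)
  have hpow : q ^ ((m:ℤ)+1) * q ^ (n - 1 - (m:ℤ)) = q ^ n := by
    rw [← zpow_add₀ hq]; congr 1; ring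
  have key : (1:RatFunc ℚ) - q ^ n
      = (1 - q ^ ((m:ℤ)+1)) + q ^ ((m:ℤ)+1) * (1 - q ^ (n - 1 - (m:ℤ))) := by
    linear_combination hpow
  rw [hm, key]
  field_simp

lemma pascal₂ (n r : ℤ) (hn : 1 ≤ n) :
    qb q n r = qb q (n-1) r + q ^ (n - r) * qb q (n-1) (r-1) := by
  rcases lt_or_ge r 0 with hr | hr
  · rw [qb_zero (Or.inl hr), qb_zero (n := n-1) (k := r) (Or.inl hr),
      qb_zero (n := n-1) (k := r-1) (Or.inl (by omega))]; ring
  rcases eq_or_lt_of_le hr with hr0 | hr1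
  · rw [← hr0, qb_zero (n := n-1) (k := 0-1) (Or.inl (by norm_num)),
      qb_zero_right (by omega), qb_zero_right (by omega)]
    norm_num
  rcases lt_or_ge (n:ℤ) r with hnr | hnr
  · rw [qb_zero (Or.inr hnr), qb_zero (n := n-1) (k := r) (Or.inr (by omega)),
      qb_zero (n := n-1) (k := r-1) (Or.inr (by omega))]; ring
  rcases eq_or_lt_of_le hnr with hrn | hrn
  · rw [hrn] at *
    rw [qb_self (by omega), qb_self (by omega), qb_zero (n := n-1) (k := n) (Or.inr (by omega))]
    norm_num
  -- main case
  have hm : ∃ m : ℕ, r = (m:ℤ) + 1 := ⟨(r-1).toNat, by omega⟩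
  obtain ⟨m, hm⟩ := hm
  rw [qb_eq (by omega) (by omega), qb_eq (by omega) (by omega), qb_eq (by omega) (by omega)]
  have h1 : r.toNat = m + 1 := by omega
  have h2 : (r-1).toNat = m := by omega
  rw [h1, h2, Nu_succ' n m, Nu_succ (n-1) m, De_succ m]
  have hDm := De_ne_zero m
  have hfr : (1:RatFunc ℚ) - q ^ ((m:ℤ)+1) ≠ 0 := one_sub_q_zpow_ne_zero (by omega)
  have hpow : q ^ (n - ((m:ℤ)+1)) * q ^ ((m:ℤ)+1) = q ^ n := by
    rw [← zpow_add₀ hq]; congr 1; ring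
  have key : (1:RatFunc ℚ) - q ^ n
      = (1 - q ^ (n - 1 - (m:ℤ))) + q ^ (n - ((m:ℤ)+1)) * (1 - q ^ ((m:ℤ)+1)) := by
    have : q ^ (n - 1 - (m:ℤ)) = q ^ (n - ((m:ℤ)+1)) := by congr 1; ring
    rw [this]; linear_combination hpow
  rw [hm, key]
  field_simp

/-- The exponent `j(3j+1)/2 + kj`. -/
def Ex (k j : ℤ) : ℤ := j * (3 * j + 1) / 2 + k * j

lemma Ex_half (j : ℤ) : 2 * (j * (3 * j + 1) / 2) = j * (3 * j + 1) := by
  have h : j * (3 * j + 1) = j * (j + 1) + 2 * (j * j) := by ring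
  rcases Int.even_mul_succ_self j with ⟨c, hc⟩
  omega

lemma Ex_addk (k j c : ℤ) : Ex (k + c) j = Ex k j + c * j := by
  unfold Ex; ring

lemma Ex_succ (k i : ℤ) : Ex k (i + 1) = Ex (k + 3) i + (k + 2) := by
  unfold Ex
  have hA := Ex_half i
  have hB := Ex_half (i + 1)
  have hd : (i+1) * (3*(i+1)+1) / 2 = i * (3*i+1) / 2 + 3*i + 2 := by
    have h2 : 2 * ((i+1) * (3*(i+1)+1) / 2) = 2 * (i * (3*i+1) / 2) + 6*i + 4 := by
      rw [hA, hB]; ring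
    omega
  rw [hd]
  ring

/-- generic term of the sums. -/
noncomputable def trm (a b k j : ℤ) : RatFunc ℚ :=
  (-1 : RatFunc ℚ) ^ j * q ^ (Ex k j) * qb q (a - j) (b + j)

/-- The sum `F a b k = ∑ j, (-1)^j q^(j(3j+1)/2+kj) [a-j choose b+j]`. -/
noncomputable def F (a b k : ℤ) : RatFunc ℚ := ∑ j ∈ Finset.Icc (-b) (a - b), trm a b k j

lemma trm_eq_zero {a b k j : ℤ} (h : b + j < 0 ∨ a - j < b + j) : trm a b k j = 0 := by
  unfold trm
  rw [qb_zero (by omega), mul_zero]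

lemma sum_trm {a b k lo hi : ℤ} (hb : 0 ≤ b) (hab : b ≤ a) (h1 : lo ≤ -b) (h2 : a - b ≤ hi) :
    ∑ j ∈ Finset.Icc lo hi, trm a b k j = F a b k := by
  refine (Finset.sum_subset (Finset.Icc_subset_Icc h1 h2) fun j hj hj' => ?_).symm
  rw [Finset.mem_Icc] at hj
  rw [Finset.mem_Icc] at hj'
  exact trm_eq_zero (by omega)

lemma neg_one_zpow_succ (i : ℤ) : (-1 : RatFunc ℚ) ^ (i + 1) = -(-1 : RatFunc ℚ) ^ i := by
  rw [zpow_add₀ (by norm_num : (-1 : RatFunc ℚ) ≠ 0), zpow_one]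
  ring

lemma relI (a b k : ℤ) (hb : 0 ≤ b) (hba : b + 1 ≤ a) :
    F (a+1) (b+1) k = F a b k + q ^ (b+1) * F a (b+1) (k+1) := by
  have hL : F (a+1) (b+1) k = ∑ j ∈ Finset.Icc (-(b+1)) (a - b), trm (a+1) (b+1) k j :=
    (sum_trm (by omega) (by omega) (by omega) (by omega)).symm
  have hR1 : F a b k = ∑ j ∈ Finset.Icc (-(b+1)) (a - b), trm a b k j :=
    (sum_trm (by omega) (by omega) (by omega) (by omega)).symm
  have hR2 : F a (b+1) (k+1) = ∑ j ∈ Finset.Icc (-(b+1)) (a - b), trm a (b+1) (k+1) j :=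
    (sum_trm (by omega) (by omega) (by omega) (by omega)).symm
  rw [hL, hR1, hR2, Finset.mul_sum, ← Finset.sum_add_distrib]
  refine Finset.sum_congr rfl fun j hj => ?_
  rw [Finset.mem_Icc] at hj
  unfold trm
  have hp := pascal₁ (a + 1 - j) (b + 1 + j) (by omega)
  have e1 : a + 1 - j - 1 = a - j := by ring
  have e2 : b + 1 + j - 1 = b + j := by ring
  rw [e1, e2] at hp
  rw [hp]
  have hpow : q ^ (Ex k j) * q ^ (b + 1 + j) = q ^ (b+1) * q ^ (Ex (k+1) j) := by
    rw [← zpow_add₀ hq, ← zpow_add₀ hq, Ex_addk k j 1]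
    congr 1; ring
  linear_combination ((-1:RatFunc ℚ)^j * qb q (a-j) (b+1+j)) * hpow

lemma relII (a b k : ℤ) (hb : 0 ≤ b) (hba : b + 1 ≤ a) :
    F (a+1) (b+1) k = F a (b+1) k + q ^ (a - b) * F a b (k-2) := by
  have hL : F (a+1) (b+1) k = ∑ j ∈ Finset.Icc (-(b+1)) (a - b), trm (a+1) (b+1) k j :=
    (sum_trm (by omega) (by omega) (by omega) (by omega)).symm
  have hR1 : F a (b+1) k = ∑ j ∈ Finset.Icc (-(b+1)) (a - b), trm a (b+1) k j :=
    (sum_trm (by omega) (by omega) (by omega) (by omega)).symm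
  have hR2 : F a b (k-2) = ∑ j ∈ Finset.Icc (-(b+1)) (a - b), trm a b (k-2) j :=
    (sum_trm (by omega) (by omega) (by omega) (by omega)).symm
  rw [hL, hR1, hR2, Finset.mul_sum, ← Finset.sum_add_distrib]
  refine Finset.sum_congr rfl fun j hj => ?_
  rw [Finset.mem_Icc] at hj
  unfold trm
  have hp := pascal₂ (a + 1 - j) (b + 1 + j) (by omega)
  have e1 : a + 1 - j - 1 = a - j := by ring
  have e2 : b + 1 + j - 1 = b + j := by ring
  have e3 : a + 1 - j - (b + 1 + j) = a - b - 2 * j := by ring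
  rw [e1, e2, e3] at hp
  rw [hp]
  have hpow : q ^ (Ex k j) * q ^ (a - b - 2 * j) = q ^ (a - b) * q ^ (Ex (k-2) j) := by
    rw [← zpow_add₀ hq, ← zpow_add₀ hq, show (k - 2 : ℤ) = k + (-2) from by ring,
      Ex_addk k j (-2)]
    congr 1; ring
  linear_combination ((-1:RatFunc ℚ)^j * qb q (a-j) (b+j)) * hpow

lemma relIII (a b k : ℤ) (hb : 0 ≤ b) (hba : b + 2 ≤ a + 1) :
    F (a+1) b k = -q ^ (k+2) * F a (b+1) (k+3) := by
  have hL : F (a+1) b k = ∑ j ∈ Finset.Icc (-b) (a + 1 - b), trm (a+1) b k j := rfl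
  have hR : F a (b+1) (k+3) = ∑ i ∈ Finset.Icc (-(b+1)) (a - b), trm a (b+1) (k+3) i :=
    (sum_trm (by omega) (by omega) (by omega) (by omega)).symm
  rw [hL, hR, Finset.mul_sum]
  rw [show (-b : ℤ) = -(b+1) + 1 from by ring, show (a + 1 - b : ℤ) = (a - b) + 1 from by ring,
    ← Finset.map_add_right_Icc, Finset.sum_map]
  refine Finset.sum_congr rfl fun i hi => ?_
  simp only [addRightEmbedding_apply]
  unfold trm
  rw [neg_one_zpow_succ, Ex_succ k i, zpow_add₀ hq]
  have e1 : a + 1 - (i + 1) = a - i := by ring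
  have e2 : b + (i + 1) = b + 1 + i := by ring
  rw [e1, e2]
  ring

lemma Ex_zero (k : ℤ) : Ex k 0 = 0 := by unfold Ex; norm_num

lemma Ex_negone (k : ℤ) : Ex k (-1) = 1 - k := by unfold Ex; norm_num; omega

lemma trm_at_zero (a b k : ℤ) : trm a b k 0 = qb q a b := by
  unfold trm
  rw [Ex_zero]
  norm_num

lemma trm_at_negone (a b k : ℤ) : trm a b k (-1) = -(q ^ (1-k) * qb q (a+1) (b-1)) := by
  unfold trm
  rw [Ex_negone]
  rw [show (-1 : RatFunc ℚ) ^ (-1:ℤ) = -1 from by norm_num]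
  rw [show a - (-1) = a + 1 from by ring, show b + (-1) = b - 1 from by ring]
  ring

lemma F00 (k : ℤ) : F 0 0 k = 1 := by
  unfold F
  rw [show (-(0:ℤ)) = 0 from by ring, show (0:ℤ) - 0 = 0 from by ring, Finset.Icc_self,
    Finset.sum_singleton, trm_at_zero]
  exact qb_zero_right le_rfl

lemma F10 (k : ℤ) : F 1 0 k = 1 := by
  unfold F
  rw [show (-(0:ℤ)) = 0 from by ring, show (1:ℤ) - 0 = 1 from by ring,
    show Finset.Icc (0:ℤ) 1 = {0, 1} from by decide]
  rw [Finset.sum_insert (by decide), Finset.sum_singleton, trm_at_zero,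
    qb_zero_right (by norm_num), trm_eq_zero (by omega)]
  ring

lemma F11 (k : ℤ) : F 1 1 k = 1 - q ^ (1 - k) := by
  unfold F
  rw [show (1:ℤ) - 1 = 0 from by ring,
    show Finset.Icc (-1:ℤ) 0 = {-1, 0} from by decide]
  rw [Finset.sum_insert (by decide), Finset.sum_singleton, trm_at_zero, trm_at_negone,
    qb_self (by norm_num), show (1:ℤ) + 1 = 2 from by ring, show (1:ℤ) - 1 = 0 from by ring,
    qb_zero_right (by norm_num)]
  ring

lemma qp1 : q ^ (1:ℤ) = q := zpow_one q
lemma qp2 : q ^ (2:ℤ) = q * q := by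
  rw [show (2:ℤ) = 1 + 1 from by norm_num, zpow_add₀ hq, qp1]
lemma qp3 : q ^ (3:ℤ) = q * q * q := by
  rw [show (3:ℤ) = 2 + 1 from by norm_num, zpow_add₀ hq, qp1, qp2]
lemma qm1 : q ^ (-1:ℤ) = q⁻¹ := by
  rw [show (-1:ℤ) = -(1:ℤ) from rfl, zpow_neg, qp1]
lemma qm2 : q ^ (-2:ℤ) = (q * q)⁻¹ := by
  rw [show (-2:ℤ) = -(2:ℤ) from rfl, zpow_neg, qp2]
lemma qm3 : q ^ (-3:ℤ) = (q * q * q)⁻¹ := by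
  rw [show (-3:ℤ) = -(3:ℤ) from rfl, zpow_neg, qp3]

section Jlemmas
variable {p : ℤ}

lemma J1 (hp : 0 ≤ p) (k : ℤ) :
    F (2*p+2) (p+1) k = F (2*p+1) p k + q ^ (p+1) * F (2*p+1) (p+1) (k+1) := by
  have h := relI (2*p+1) p k hp (by omega)
  rwa [show (2*p+1+1:ℤ) = 2*p+2 from by ring] at h

lemma J2 (hp : 0 ≤ p) (k : ℤ) :
    F (2*p+2) (p+1) k = F (2*p+1) (p+1) k + q ^ (p+1) * F (2*p+1) p (k-2) := by
  have h := relII (2*p+1) p k hp (by omega)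
  rwa [show (2*p+1+1:ℤ) = 2*p+2 from by ring, show (2*p+1-p:ℤ) = p+1 from by ring] at h

lemma J3 (hp : 0 ≤ p) (k : ℤ) :
    F (2*p+3) (p+1) k = F (2*p+2) p k + q ^ (p+1) * F (2*p+2) (p+1) (k+1) := by
  have h := relI (2*p+2) p k hp (by omega)
  rwa [show (2*p+2+1:ℤ) = 2*p+3 from by ring] at h

lemma J4 (hp : 0 ≤ p) (k : ℤ) :
    F (2*p+3) (p+1) k = F (2*p+2) (p+1) k + q ^ (p+2) * F (2*p+2) p (k-2) := by
  have h := relII (2*p+2) p k hp (by omega)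
  rwa [show (2*p+2+1:ℤ) = 2*p+3 from by ring, show (2*p+2-p:ℤ) = p+2 from by ring] at h

lemma J5 (hp : 0 ≤ p) (k : ℤ) :
    F (2*p+3) (p+2) k = F (2*p+2) (p+1) k + q ^ (p+2) * F (2*p+2) (p+2) (k+1) := by
  have h := relI (2*p+2) (p+1) k (by omega) (by omega)
  rwa [show (2*p+2+1:ℤ) = 2*p+3 from by ring, show (p+1+1:ℤ) = p+2 from by ring] at h

lemma J6 (hp : 0 ≤ p) (k : ℤ) :
    F (2*p+2) p k = -q ^ (k+2) * F (2*p+1) (p+1) (k+3) := by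
  have h := relIII (2*p+1) p k hp (by omega)
  rwa [show (2*p+1+1:ℤ) = 2*p+2 from by ring] at h

lemma J7 (hp : 0 ≤ p) (k : ℤ) :
    F (2*p+3) (p+1) k = -q ^ (k+2) * F (2*p+2) (p+2) (k+3) := by
  have h := relIII (2*p+2) (p+1) k (by omega) (by omega)
  rwa [show (2*p+2+1:ℤ) = 2*p+3 from by ring, show (p+1+1:ℤ) = p+2 from by ring] at h

end Jlemmas

lemma bundle (L : ℕ) :
    F (2*(L:ℤ)) (L:ℤ) 0 = 1 ∧
    F (2*(L:ℤ)) (L:ℤ) 1 = q^(L:ℤ) ∧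
    F (2*(L:ℤ)) (L:ℤ) 2 = -q^(-1:ℤ) + q^(-1:ℤ) * q^(L:ℤ) + q^(L:ℤ) ∧
    F (2*(L:ℤ)) (L:ℤ) 3
      = -q^(-2:ℤ) + (q^(-2:ℤ) + q^(-1:ℤ) + 1) * (q^(L:ℤ))^2 - q^(-1:ℤ) * (q^(L:ℤ))^3 ∧
    F (2*(L:ℤ)+1) (L:ℤ) (-1) = 1 ∧
    F (2*(L:ℤ)+1) (L:ℤ) 0 = 1 ∧
    F (2*(L:ℤ)+1) (L:ℤ) 1 = q^(L:ℤ) + q * q^(L:ℤ) - q * (q^(L:ℤ))^2 ∧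
    F (2*(L:ℤ)+1) ((L:ℤ)+1) 1 = 0 ∧
    F (2*(L:ℤ)+1) ((L:ℤ)+1) 2 = -q^(-1:ℤ) + q^(L:ℤ) ∧
    F (2*(L:ℤ)+1) ((L:ℤ)+1) 3 = -q^(-2:ℤ) + (q^(L:ℤ))^2 := by
  induction L with
  | zero =>
    refine ⟨?_, ?_, ?_, ?_, ?_, ?_, ?_, ?_, ?_, ?_⟩ <;>
      · norm_num [F00, F10, F11, qm1, qm2]
        try ring
  | succ L ih =>
    obtain ⟨h0, h1, h2, h3, em1, e0, e1, g1, g2, g3⟩ := ih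
    have hp : (0:ℤ) ≤ (L:ℤ) := Int.natCast_nonneg L
    have hzq : q ^ (L:ℤ) ≠ 0 := q_zpow_ne_zero _
    have hq1 : q ^ ((L:ℤ)+1) = q ^ (L:ℤ) * q := by rw [zpow_add₀ hq, qp1]
    have hq2 : q ^ ((L:ℤ)+2) = q ^ (L:ℤ) * (q * q) := by rw [zpow_add₀ hq, qp2]
    rw [show ((L+1:ℕ):ℤ) = (L:ℤ)+1 from by push_cast; ring]
    rw [show 2*((L:ℤ)+1) = 2*(L:ℤ)+2 from by ring]
    rw [show (2*(L:ℤ)+2)+1 = 2*(L:ℤ)+3 from by ring]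
    rw [show ((L:ℤ)+1)+1 = (L:ℤ)+2 from by ring]
    -- new h0
    have H0 : F (2*(L:ℤ)+2) ((L:ℤ)+1) 0 = 1 := by
      rw [J1 hp 0, show (0:ℤ)+1 = 1 from by norm_num, e0, g1]
      ring
    -- new h1
    have H1 : F (2*(L:ℤ)+2) ((L:ℤ)+1) 1 = q ^ ((L:ℤ)+1) := by
      rw [J1 hp 1, show (1:ℤ)+1 = 2 from by norm_num, e1, g2, hq1, qm1]
      field_simp [hq]
      try ring
    -- new h2
    have H2 : F (2*(L:ℤ)+2) ((L:ℤ)+1) 2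
        = -q^(-1:ℤ) + q^(-1:ℤ) * q^((L:ℤ)+1) + q^((L:ℤ)+1) := by
      rw [J2 hp 2, show (2:ℤ)-2 = 0 from by norm_num, e0, g2, hq1, qm1]
      field_simp [hq]
      try ring
    -- new h3
    have H3 : F (2*(L:ℤ)+2) ((L:ℤ)+1) 3
        = -q^(-2:ℤ) + (q^(-2:ℤ) + q^(-1:ℤ) + 1) * (q^((L:ℤ)+1))^2
          - q^(-1:ℤ) * (q^((L:ℤ)+1))^3 := by
      rw [J2 hp 3, show (3:ℤ)-2 = 1 from by norm_num, e1, g3, hq1, qm1, qm2]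
      field_simp [hq]
      try ring
    -- new e(-1)
    have Em1 : F (2*(L:ℤ)+3) ((L:ℤ)+1) (-1) = 1 := by
      rw [J3 hp (-1), show (-1:ℤ)+1 = 0 from by norm_num, H0,
        J6 hp (-1), show (-1:ℤ)+2 = 1 from by norm_num,
        show (-1:ℤ)+3 = 2 from by norm_num, g2, hq1, qm1, qp1]
      field_simp [hq]
      try ring
    -- new e0
    have E0 : F (2*(L:ℤ)+3) ((L:ℤ)+1) 0 = 1 := by
      rw [J3 hp 0, show (0:ℤ)+1 = 1 from by norm_num, H1,
        J6 hp 0, show (0:ℤ)+2 = 2 from by norm_num,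
        show (0:ℤ)+3 = 3 from by norm_num, g3, hq1, qm2, qp2]
      field_simp [hq]
      try ring
    -- new e1
    have E1 : F (2*(L:ℤ)+3) ((L:ℤ)+1) 1
        = q^((L:ℤ)+1) + q * q^((L:ℤ)+1) - q * (q^((L:ℤ)+1))^2 := by
      rw [J4 hp 1, show (1:ℤ)-2 = -1 from by norm_num, H1,
        J6 hp (-1), show (-1:ℤ)+2 = 1 from by norm_num,
        show (-1:ℤ)+3 = 2 from by norm_num, g2, hq1, hq2, qm1, qp1]
      field_simp [hq]
      try ring
    -- the three auxiliary values F (2L+2) (L+2) m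
    have hX2 : F (2*(L:ℤ)+2) ((L:ℤ)+2) 2 = -(q^(-1:ℤ)) := by
      have j7 := J7 hp (-1)
      rw [show (-1:ℤ)+2 = 1 from by norm_num, show (-1:ℤ)+3 = 2 from by norm_num,
        Em1, qp1] at j7
      rw [qm1]
      set X := F (2*(L:ℤ)+2) ((L:ℤ)+2) 2 with hX
      field_simp [hq]
      try ring
      linear_combination j7
    have hX3 : F (2*(L:ℤ)+2) ((L:ℤ)+2) 3 = -(q^(-2:ℤ)) := by
      have j7 := J7 hp 0
      rw [show (0:ℤ)+2 = 2 from by norm_num, show (0:ℤ)+3 = 3 from by norm_num,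
        E0, qp2] at j7
      rw [qm2]
      set X := F (2*(L:ℤ)+2) ((L:ℤ)+2) 3 with hX
      field_simp [hq]
      try ring
      linear_combination j7
    have hX4 : F (2*(L:ℤ)+2) ((L:ℤ)+2) 4
        = -(q^(-2:ℤ) * q^(L:ℤ)) - q^(-1:ℤ) * q^(L:ℤ) + (q^(L:ℤ))^2 := by
      have j7 := J7 hp 1
      rw [show (1:ℤ)+2 = 3 from by norm_num, show (1:ℤ)+3 = 4 from by norm_num,
        E1, qp3, hq1] at j7
      rw [qm1, qm2]
      set X := F (2*(L:ℤ)+2) ((L:ℤ)+2) 4 with hX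
      simp only [zpow_natCast] at j7 ⊢
      field_simp [hq]
      try ring
      have j8 : X*q^2 + q^L + q*q^L - q^2*(q^L)^2 = 0 :=
        mul_left_cancel₀ hq (by linear_combination j7)
      linear_combination j8
    -- new g1
    have G1 : F (2*(L:ℤ)+3) ((L:ℤ)+2) 1 = 0 := by
      rw [J5 hp 1, show (1:ℤ)+1 = 2 from by norm_num, H1, hX2, hq1, hq2, qm1]
      field_simp [hq]
      try ring
    -- new g2
    have G2 : F (2*(L:ℤ)+3) ((L:ℤ)+2) 2 = -q^(-1:ℤ) + q^((L:ℤ)+1) := by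
      rw [J5 hp 2, show (2:ℤ)+1 = 3 from by norm_num, H2, hX3, hq1, hq2, qm1, qm2]
      field_simp [hq]
      try ring
    -- new g3
    have G3 : F (2*(L:ℤ)+3) ((L:ℤ)+2) 3 = -q^(-2:ℤ) + (q^((L:ℤ)+1))^2 := by
      rw [J5 hp 3, show (3:ℤ)+1 = 4 from by norm_num, H3, hX4, hq1, hq2, qm1, qm2]
      field_simp [hq]
      try ring
    exact ⟨H0, H1, H2, H3, Em1, E0, E1, G1, G2, G3⟩

lemma qb32 : qb q 3 2 = 1 + q + q^2 := by
  rw [qb_eq (by norm_num) (by norm_num), show ((2:ℤ)).toNat = 2 from rfl]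
  unfold Nu De
  rw [Finset.prod_range_succ, Finset.prod_range_succ, Finset.prod_range_zero,
    Finset.prod_range_succ, Finset.prod_range_succ, Finset.prod_range_zero]
  norm_num
  have h1 : (1:RatFunc ℚ) - q ≠ 0 := by
    have := one_sub_q_zpow_ne_zero (le_refl (1:ℤ))
    rwa [qp1] at this
  have h2z : (1:RatFunc ℚ) - q^(2:ℤ) ≠ 0 := one_sub_q_zpow_ne_zero (by norm_num)
  rw [div_eq_iff (mul_ne_zero h1 (by simpa using h2z))]
  ring

/-- `h(L,3) = -q^(-2) + q^(2L-2)[3 choose 2]_q - q^(3L-1)`. -/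
theorem stmt_3 (L : ℕ) :
    ∑ j ∈ Finset.Icc (-(L : ℤ)) (2 * L),
      (-1 : RatFunc ℚ) ^ j * q ^ (j * (3 * j + 1) / 2 + 3 * j) * qb q (2 * L - j) (L + j)
      = -q ^ (-2 : ℤ) + q ^ (2 * (L : ℤ) - 2) * qb q 3 2 - q ^ (3 * (L : ℤ) - 1) := by
  have hb := (bundle L).2.2.2.1
  have hsum : (∑ j ∈ Finset.Icc (-(L : ℤ)) (2 * L),
      (-1 : RatFunc ℚ) ^ j * q ^ (j * (3 * j + 1) / 2 + 3 * j) * qb q (2 * L - j) (L + j))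
      = F (2*(L:ℤ)) (L:ℤ) 3 := by
    rw [← sum_trm (a := 2*(L:ℤ)) (b := (L:ℤ)) (k := 3) (lo := -(L:ℤ)) (hi := 2*(L:ℤ))
      (by positivity) (by omega) le_rfl (by omega)]
    refine Finset.sum_congr rfl fun j hj => ?_
    unfold trm Ex
    ring
  rw [hsum, hb, qb32]
  rw [show (2*(L:ℤ)-2) = (L:ℤ) + ((L:ℤ) + (-2)) from by ring,
    show (3*(L:ℤ)-1) = (L:ℤ) + ((L:ℤ) + ((L:ℤ) + (-1))) from by ring,
    zpow_add₀ hq, zpow_add₀ hq, zpow_add₀ hq, zpow_add₀ hq, zpow_add₀ hq]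
  rw [qm1, qm2]
  field_simp [hq]
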